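/- arXiv:2103.08051 — 4 statements merged into one kernel-verified Lean document; each statement's English description precedes it below -/
import Mathlib

section
/- For each provider i and each trip (j,l,t), the partial derivative of Φ with respect to p_i equals the partial derivative of provider i's payoff F̃_i with respect to p_i, where F̃_i(p_i, p_k) = p_i·D·(1/2 − p_i/p_max + p_k/(2·p_max)) − c·D·(1/2 − p_i/p_max + p_k/(2·p_max)) and Φ(p_1, p_2) = p_1·p_2·D/(2·p_max) + Σ_{i=1,2} [p_i·D·(1/2 − p_i/p_max) + c·D·p_i/p_max]. -/
theorem deriv_eq_of_eq_add_const {𝕜 E : Type*} [NontriviallyNormedField 𝕜] [NormedAddCommGroup E]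
    [NormedSpace 𝕜 E] {f g : 𝕜 → E} (K : E) (h : ∀ x, f x = g x + K) (x : 𝕜) :
    deriv f x = deriv g x := by
  rw [funext h, deriv_add_const]

theorem potential_partial_derivatives_general (pmax D c : ℝ) :
    let F : ℝ → ℝ → ℝ := fun pi pk =>
      pi * D * (1/2 - pi/pmax + pk/(2*pmax)) - c * D * (1/2 - pi/pmax + pk/(2*pmax))
    let Φ : ℝ → ℝ → ℝ := fun p1 p2 =>
      p1 * p2 * D / (2*pmax)
        + (p1 * D * (1/2 - p1/pmax) + c * D * p1/pmax)
        + (p2 * D * (1/2 - p2/pmax) + c * D * p2/pmax)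
    (∀ p1 p2 : ℝ, deriv (fun p => Φ p p2) p1 = deriv (fun p => F p p2) p1) ∧
    (∀ p1 p2 : ℝ, deriv (fun p => Φ p1 p) p2 = deriv (fun p => F p p1) p2) := by
  intro F Φ
  -- `Φ p b - F p b` does not depend on `p`.
  have potential (p1 p2 : ℝ) : deriv (fun p => Φ p p2) p1 = deriv (fun p => F p p2) p1 :=
    deriv_eq_of_eq_add_const
      (p2 * D * (1/2 - p2/pmax) + c * D * p2/pmax + c * D * (1/2 + p2/(2*pmax)))
      (fun p => by simp only [Φ, F]; ring) p1
  have Φ_comm (a b : ℝ) : Φ a b = Φ b a := by simp only [Φ]; ring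
  refine ⟨potential, fun p1 p2 => ?_⟩
  simp only [Φ_comm p1]
  exact potential p2 p1

theorem potential_partial_derivatives (pmax D c : ℝ) (hpmax : 0 < pmax) (hD : 0 < D) :
    let F : ℝ → ℝ → ℝ := fun pi pk =>
      pi * D * (1/2 - pi/pmax + pk/(2*pmax)) - c * D * (1/2 - pi/pmax + pk/(2*pmax))
    let Φ : ℝ → ℝ → ℝ := fun p1 p2 =>
      p1 * p2 * D / (2*pmax)
        + (p1 * D * (1/2 - p1/pmax) + c * D * p1/pmax)
        + (p2 * D * (1/2 - p2/pmax) + c * D * p2/pmax)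
    (∀ p1 p2 : ℝ, deriv (fun p => Φ p p2) p1 = deriv (fun p => F p p2) p1) ∧
    (∀ p1 p2 : ℝ, deriv (fun p => Φ p1 p) p2 = deriv (fun p => F p p1) p2) :=
  potential_partial_derivatives_general pmax D c
end

section
/- The difference Φ(p_i', p_k) − Φ(p_i, p_k) equals F̃_i(p_i', p_k) − F̃_i(p_i, p_k) for all p_i, p_i', p_k ∈ ℝ, i.e., Φ is an exact potential for the pricing game in the price variables. -/
theorem exact_potential (pmax D c : ℝ) (hpmax : 0 < pmax) (hD : 0 < D) :
    let F : ℝ → ℝ → ℝ := fun pi pk => (pi - c) * D * (1/2 - pi/pmax + pk/(2*pmax))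
    let Φ : ℝ → ℝ → ℝ := fun p1 p2 =>
      D * p1 * p2 / (2*pmax)
        + (p1 * D * (1/2 - p1/pmax) + c * D * p1/pmax)
        + (p2 * D * (1/2 - p2/pmax) + c * D * p2/pmax)
    (∀ pi pi' pk : ℝ, Φ pi' pk - Φ pi pk = F pi' pk - F pi pk) ∧
    (∀ pk pk' p1 : ℝ, Φ p1 pk' - Φ p1 pk = F pk' p1 - F pk p1) := by
  intro F Φ
  have h := hpmax.ne'
  constructor <;> intro a b c' <;> simp only [F, Φ] <;> field_simp <;> ring
end

section
/- If for every trip (j,l,t) the partition demands satisfy D̂¹_{j,l,t}·D̂²_{j,l,t} = 0 and D̂¹ + D̂² = D·(1 − p/p_max), and provider i sets price p_i = p when D̂ⁱ > 0 and p_i = p_max when D̂ⁱ = 0, then each provider's realized duopoly demand max(D·(1/2 − p_i/p_max + p_k/(2·p_max)), 0) equals D̂ⁱ. -/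
lemma aux_duopoly (pmax : ℝ) (hpmax : 0 < pmax)
    (Dt pt p1t p2t D1t D2t : ℝ)
    (hD : 0 < Dt) (hp0 : 0 ≤ pt) (hpu : pt ≤ pmax)
    (hD1nn : 0 ≤ D1t) (hD2nn : 0 ≤ D2t)
    (hprod : D1t * D2t = 0)
    (hsum : D1t + D2t = Dt * (1 - pt / pmax))
    (hp1a : 0 < D1t → p1t = pt) (hp1b : D1t = 0 → p1t = pmax)
    (hp2a : 0 < D2t → p2t = pt) (hp2b : D2t = 0 → p2t = pmax) :
    max (Dt * (1/2 - p1t / pmax + p2t / (2*pmax))) 0 = D1t := by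
  have hne : pmax ≠ 0 := ne_of_gt hpmax
  have hself : pmax / pmax = 1 := div_self hne
  have hhalf : pmax / (2*pmax) = 1/2 := by field_simp
  rcases mul_eq_zero.mp hprod with h1 | h2
  · -- D1t = 0
    rw [hp1b h1, h1]
    rcases eq_or_lt_of_le hD2nn with h2 | h2
    · rw [hp2b h2.symm]
      rw [max_eq_right]
      nlinarith
    · rw [hp2a h2]
      rw [max_eq_right]
      have hle : pt / (2*pmax) ≤ pmax / (2*pmax) := by
        apply div_le_div_of_nonneg_right hpu; linarith
      nlinarith
  · -- D2t = 0
    rw [hp2b h2]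
    have hs : D1t = Dt * (1 - pt / pmax) := by rw [h2] at hsum; linarith
    rcases eq_or_lt_of_le hD1nn with h1 | h1
    · rw [hp1b h1.symm, ← h1]
      rw [max_eq_left (by nlinarith)]
      nlinarith
    · rw [hp1a h1]
      rw [max_eq_left (by nlinarith)]
      rw [hs]
      field_simp
      ring

theorem monopoly_partition_induces_duopoly_demand {ι : Type*}
    (pmax : ℝ) (hpmax : 0 < pmax)
    (D p p1 p2 D1 D2 : ι → ℝ)
    (hD : ∀ t, 0 < D t)
    (hp : ∀ t, p t ∈ Set.Icc (0:ℝ) pmax)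
    (hD1nn : ∀ t, 0 ≤ D1 t) (hD2nn : ∀ t, 0 ≤ D2 t)
    (hprod : ∀ t, D1 t * D2 t = 0)
    (hsum : ∀ t, D1 t + D2 t = D t * (1 - p t / pmax))
    (hp1 : ∀ t, (0 < D1 t → p1 t = p t) ∧ (D1 t = 0 → p1 t = pmax))
    (hp2 : ∀ t, (0 < D2 t → p2 t = p t) ∧ (D2 t = 0 → p2 t = pmax)) :
    (∀ t, max (D t * (1/2 - p1 t / pmax + p2 t / (2*pmax))) 0 = D1 t) ∧
    (∀ t, max (D t * (1/2 - p2 t / pmax + p1 t / (2*pmax))) 0 = D2 t) := by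
  constructor
  · intro t
    exact aux_duopoly pmax hpmax (D t) (p t) (p1 t) (p2 t) (D1 t) (D2 t)
      (hD t) (hp t).1 (hp t).2 (hD1nn t) (hD2nn t) (hprod t) (hsum t)
      (hp1 t).1 (hp1 t).2 (hp2 t).1 (hp2 t).2
  · intro t
    exact aux_duopoly pmax hpmax (D t) (p t) (p2 t) (p1 t) (D2 t) (D1 t)
      (hD t) (hp t).1 (hp t).2 (hD2nn t) (hD1nn t)
      (by rw [mul_comm]; exact hprod t) (by rw [add_comm]; exact hsum t)
      (hp2 t).1 (hp2 t).2 (hp1 t).1 (hp1 t).2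
end

section
/- For the two-player game with payoffs F̃_i(p_i, p_k) = (p_i − c)·D·(1/2 − r·β·p_i + β·p_k), r > 1, β > 0, D > 0, the function Φ(p_1, p_2) = D·β·p_1·p_2 + Σ_i [(p_i·D·(1/2 − r·β·p_i)) + c·D·r·β·p_i] satisfies ∂Φ/∂p_i = ∂F̃_i/∂p_i for i = 1, 2, and Φ is strictly concave since its Hessian [[−2rβD, βD], [βD, −2rβD]] is negative definite. -/
theorem general_potential_game (r β D c : ℝ)
    (hr : 1 < r) (hβ : 0 < β) (hD : 0 < D) :
    let F : ℝ → ℝ → ℝ := fun pi pk => (pi - c) * D * (1/2 - r*β*pi + β*pk)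
    let Φ : ℝ → ℝ → ℝ := fun p1 p2 =>
      D * β * p1 * p2
        + (p1 * D * (1/2 - r*β*p1) + c * D * r * β * p1)
        + (p2 * D * (1/2 - r*β*p2) + c * D * r * β * p2)
    (∀ p1 p2 : ℝ, deriv (fun p => Φ p p2) p1 = deriv (fun p => F p p2) p1) ∧
    (∀ p1 p2 : ℝ, deriv (fun p => Φ p1 p) p2 = deriv (fun p => F p p1) p2) ∧
    StrictConcaveOn ℝ Set.univ (fun p : ℝ × ℝ => Φ p.1 p.2) := by
  intro F Φ
  refine ⟨?_, ?_, ?_⟩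
  · intro p1 p2
    have hfun : (fun p => Φ p p2) =
        fun p => F p p2 + ((p2 * D * (1/2 - r*β*p2) + c * D * r * β * p2)
          + c * D / 2 + c * D * β * p2) := by
      funext p; simp only [F, Φ]; ring
    rw [hfun, deriv_add_const]
  · intro p1 p2
    have hfun : (fun p => Φ p1 p) =
        fun p => F p p1 + ((p1 * D * (1/2 - r*β*p1) + c * D * r * β * p1)
          + c * D / 2 + c * D * β * p1) := by
      funext p; simp only [F, Φ]; ring
    rw [hfun, deriv_add_const]
  · refine ⟨convex_univ, ?_⟩
    rintro ⟨x1, x2⟩ - ⟨y1, y2⟩ - hxy a b ha hb hab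
    simp only [ne_eq, Prod.mk.injEq, not_and_or] at hxy
    have hne : (x1 - y1)^2 + (x2 - y2)^2 > 0 := by
      rcases hxy with h | h
      · have h' : x1 - y1 ≠ 0 := sub_ne_zero.mpr h
        have : (x1 - y1)^2 > 0 := by positivity
        nlinarith [sq_nonneg (x2 - y2)]
      · have h' : x2 - y2 ≠ 0 := sub_ne_zero.mpr h
        have : (x2 - y2)^2 > 0 := by positivity
        nlinarith [sq_nonneg (x1 - y1)]
    have hb' : b = 1 - a := by linarith
    subst hb'
    have hK : 0 < β * D * (a * (1 - a)) := by positivity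
    simp only [Φ, Prod.smul_mk, Prod.mk_add_mk, smul_eq_mul]
    nlinarith [mul_pos hK (mul_pos (sub_pos.mpr hr) hne),
      mul_nonneg hK.le (sq_nonneg ((x1 - y1) - (x2 - y2))),
      mul_nonneg hK.le hne.le]
end
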